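/- Let d, s, r ≥ 1 and let E be a channel on M_s with Kraus operators E_1, …, E_r. Then the following are equivalent: (A) there exist a subchannel S from M_d to M_s, a subchannel R from M_s to M_d, and a real p > 0 such that R(E(S(X))) = p·X for all X ∈ M_d; (B) there exist a finite family (S_k)_{k∈K} of s×d complex matrices with Σ_k S_k* S_k ≤ I_d, a positive semidefinite R ∈ M_s with R ≤ I_s, a nonempty finite family (A_j)_{j∈J} of s×d complex matrices, and positive reals (α_j)_{j∈J} such that A_j* A_j = α_j·I_d for every j, A_j* A_i = 0 for all i ≠ j in J, and Σ_{i∈{1,…,r}, k∈K} √R E_i S_k X S_k* E_i* √R = Σ_{j∈J} A_j X A_j* for all X ∈ M_d, where √R is the positive semidefinite square root of R. -/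

import Mathlib

/-!
(A) ⇒ (B): if `R ∘ E ∘ S = p • id` with Kraus operators `R_l`, `E_i`, `S_k`, then every product
`R_l E_i S_k` is a scalar `c_{l,(i,k)} • 1`, since these are Kraus operators of a multiple of the
identity map. With `R := ∑ R_lᴴ R_l`, the operators `V_{ik} = √R E_i S_k` therefore satisfy
`V_xᴴ V_y = (Cᴴ C)_{xy} • 1`, and `tr (Cᴴ C) = p ≠ 0`. Mixing the `V_x` by the unitary that
diagonalises `Cᴴ C` leaves the map `X ↦ ∑ V X Vᴴ` unchanged and produces scaled isometries with
mutually orthogonal ranges; the ones with eigenvalue zero vanish and are dropped.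

(B) ⇒ (A): with `t = ∑ α_j`, the operators `t^(-1/2) A_jᴴ √R` form a subchannel because
`A_j A_jᴴ ≤ α_j • 1`, and composing them after `√R E S √R = ∑ A_j · A_jᴴ` gives
`(t⁻¹ ∑ α_j²) • id` by orthogonality.
-/

open Matrix Kronecker BigOperators
open scoped ComplexOrder

noncomputable section

/-- `Mat n` is the space of `n × n` complex matrices. -/
abbrev Mat (n : ℕ) := Matrix (Fin n) (Fin n) ℂ

/-- A subchannel from `M_n` to `M_m`: a map of Kraus form whose Kraus operators satisfy
`∑ Kᴴ K ≤ 1` in the Loewner order. -/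
def IsSubchannel {n m : Type} [Fintype n] [DecidableEq n] [Fintype m]
    (Φ : Matrix n n ℂ → Matrix m m ℂ) : Prop :=
  ∃ (k : ℕ) (K : Fin k → Matrix m n ℂ),
    (∀ X, Φ X = ∑ i, K i * X * (K i)ᴴ) ∧ (1 - ∑ i, (K i)ᴴ * K i).PosSemidef

/-- A channel from `M_n` to `M_m`: a map of Kraus form with `∑ Kᴴ K = 1`. -/
def IsChannel {n m : Type} [Fintype n] [DecidableEq n] [Fintype m]
    (Φ : Matrix n n ℂ → Matrix m m ℂ) : Prop :=
  ∃ (k : ℕ) (K : Fin k → Matrix m n ℂ),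
    (∀ X, Φ X = ∑ i, K i * X * (K i)ᴴ) ∧ (∑ i, (K i)ᴴ * K i) = 1

/-- `E` is probabilistically correctable for `ℂ^d`. -/
def ProbCorrectable (d : ℕ) {s : ℕ} (E : Mat s → Mat s) : Prop :=
  ∃ (S : Mat d → Mat s) (R : Mat s → Mat d) (p : ℝ),
    IsSubchannel S ∧ IsSubchannel R ∧ 0 < p ∧ ∀ X, R (E (S X)) = (p : ℂ) • X

/-- `E` is perfectly correctable for `ℂ^d`. -/
def PerfCorrectable (d : ℕ) {s : ℕ} (E : Mat s → Mat s) : Prop :=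
  ∃ (S : Mat d → Mat s) (R : Mat s → Mat d),
    IsSubchannel S ∧ IsSubchannel R ∧ ∀ X, R (E (S X)) = X

/-- The Choi matrix of a map on `M_s`. -/
def choi {s : ℕ} (Φ : Mat s → Mat s) : Matrix (Fin s × Fin s) (Fin s × Fin s) ℂ :=
  ∑ i : Fin s, ∑ j : Fin s, (Φ (single i j 1)) ⊗ₖ (single i j 1)

/-- `rP d s`: the largest `r` such that every channel on `M_s` with Choi rank at most `r`
is probabilistically correctable for `ℂ^d`. -/
def rP (d s : ℕ) : ℕ :=
  sSup {r : ℕ | ∀ E : Mat s → Mat s, IsChannel E → (choi E).rank ≤ r → ProbCorrectable d E}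

/-- `rP1 d s`: the largest `r` such that every channel on `M_s` with Choi rank at most `r`
is perfectly correctable for `ℂ^d`. -/
def rP1 (d s : ℕ) : ℕ :=
  sSup {r : ℕ | ∀ E : Mat s → Mat s, IsChannel E → (choi E).rank ≤ r → PerfCorrectable d E}

/-- The square root of a positive semidefinite matrix, as defined in Mathlib of December 2024
(`Matrix.PosSemidef.sqrt`, since removed from Mathlib). -/
def Matrix.PosSemidef.sqrt {n 𝕜 : Type*} [Fintype n] [DecidableEq n] [RCLike 𝕜]
    {A : Matrix n n 𝕜} (hA : A.PosSemidef) : Matrix n n 𝕜 :=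
  (hA.1.eigenvectorUnitary : Matrix n n 𝕜) * diagonal ((↑) ∘ Real.sqrt ∘ hA.1.eigenvalues) *
    (star (hA.1.eigenvectorUnitary : Matrix n n 𝕜))

open scoped MatrixOrder

namespace Matrix.PosSemidef

variable {n 𝕜 : Type*} [Fintype n] [DecidableEq n] [RCLike 𝕜] {A : Matrix n n 𝕜}

lemma sqrt_eq_cfcSqrt (hA : A.PosSemidef) : hA.sqrt = CFC.sqrt A := by
  rw [CFC.sqrt_eq_real_sqrt A hA.nonneg, cfcₙ_eq_cfc, hA.1.cfc_eq]
  rfl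

lemma sqrt_mul_sqrt (hA : A.PosSemidef) : hA.sqrt * hA.sqrt = A := by
  rw [hA.sqrt_eq_cfcSqrt]
  exact CFC.sqrt_mul_sqrt_self A hA.nonneg

lemma conjTranspose_sqrt (hA : A.PosSemidef) : hA.sqrtᴴ = hA.sqrt := by
  rw [hA.sqrt_eq_cfcSqrt]
  exact (CFC.sqrt_nonneg A).posSemidef.1

end Matrix.PosSemidef

variable {ι κ l m n : Type*}

def krausMap [Fintype ι] [Fintype n] (K : ι → Matrix m n ℂ) (X : Matrix n n ℂ) :
    Matrix m m ℂ :=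
  ∑ i, K i * X * (K i)ᴴ

def IsOrthogonalScaledIsometries [Fintype m] [DecidableEq n] (A : ι → Matrix m n ℂ)
    (α : ι → ℝ) : Prop :=
  (∀ j, 0 < α j) ∧ (∀ j, (A j)ᴴ * A j = (α j : ℂ) • 1) ∧ ∀ i j, i ≠ j → (A j)ᴴ * A i = 0

lemma krausMap_krausMap [Fintype ι] [Fintype κ] [Fintype m] [Fintype n]
    (K : ι → Matrix l m ℂ) (L : κ → Matrix m n ℂ) (X : Matrix n n ℂ) :
    krausMap K (krausMap L X) = krausMap (fun p : ι × κ => K p.1 * L p.2) X := by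
  simp only [krausMap, Fintype.sum_prod_type, Matrix.mul_sum, Matrix.sum_mul, conjTranspose_mul,
    Matrix.mul_assoc]

lemma mul_krausMap_mul_conjTranspose [Fintype ι] [Fintype m] [Fintype n] (Q : Matrix l m ℂ)
    (K : ι → Matrix m n ℂ) (X : Matrix n n ℂ) :
    Q * krausMap K X * Qᴴ = krausMap (fun i => Q * K i) X := by
  simp only [krausMap, Matrix.mul_sum, Matrix.sum_mul, conjTranspose_mul, Matrix.mul_assoc]

lemma mul_krausMap_krausMap_mul [Fintype ι] [Fintype κ] [Fintype m] [Fintype n]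
    (P : Matrix l m ℂ) (Q : Matrix m l ℂ) (E : ι → Matrix m m ℂ) (S : κ → Matrix m n ℂ)
    (X : Matrix n n ℂ) :
    P * krausMap E (krausMap S X) * Q = ∑ i, ∑ k, P * E i * S k * X * (S k)ᴴ * (E i)ᴴ * Q := by
  simp only [krausMap, Matrix.mul_sum, Matrix.sum_mul, Matrix.mul_assoc]

lemma krausMap_single_apply [Fintype ι] [Fintype n] [DecidableEq n] (K : ι → Matrix n n ℂ)
    (a b u v : n) : krausMap K (single a b 1) u v = ∑ i, K i u a * star (K i v b) := by
  simp [krausMap, Matrix.sum_apply, mul_apply, single_apply, ite_and]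

lemma eq_zero_of_sum_mul_star_eq_zero [Fintype ι] {f : ι → ℂ}
    (h : ∑ i, f i * star (f i) = 0) (i : ι) : f i = 0 :=
  congrFun (dotProduct_self_star_eq_zero (v := f) |>.mp h) i

lemma exists_eq_smul_one_of_krausMap_eq_smul [Fintype ι] [Fintype n] [DecidableEq n]
    [Nonempty n] (K : ι → Matrix n n ℂ) (p : ℂ) (h : ∀ X, krausMap K X = p • X) :
    ∃ c : ι → ℂ, (∀ i, K i = c i • 1) ∧ ∑ i, c i * star (c i) = p := by
  have hK : ∀ a b u v, ∑ i, K i u a * star (K i v b) = if u = a ∧ v = b then p else 0 := by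
    intro a b u v
    rw [← krausMap_single_apply, h]
    simp [single_apply, eq_comm]
  have off_diag : ∀ i u a, u ≠ a → K i u a = 0 := fun i u a hua =>
    eq_zero_of_sum_mul_star_eq_zero (f := fun i => K i u a) (by simpa [hua] using hK a a u u) i
  have diag : ∀ i a b, K i a a = K i b b := by
    intro i a b
    have : ∑ i, (K i a a - K i b b) * star (K i a a - K i b b) = 0 := by
      simp only [star_sub, sub_mul, mul_sub, Finset.sum_sub_distrib, hK]
      simp
    exact sub_eq_zero.mp (eq_zero_of_sum_mul_star_eq_zero this i)
  obtain ⟨a₀⟩ := ‹Nonempty n›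
  refine ⟨fun i => K i a₀ a₀, fun i => ?_, by simpa using hK a₀ a₀ a₀ a₀⟩
  ext u v
  rcases eq_or_ne u v with rfl | huv
  · simp [diag i u a₀]
  · simp [off_diag i u v huv, huv]

lemma krausMap_unitary_mix [Fintype ι] [DecidableEq ι] [Fintype n] (K : ι → Matrix m n ℂ)
    {U : Matrix ι ι ℂ} (hU : U * star U = 1) :
    krausMap (fun j => ∑ i, U i j • K i) = krausMap K := by
  ext1 X
  have hU' : ∀ i i', ∑ j, star (U i' j) * U i j = if i = i' then 1 else 0 := fun i i' => by
    simpa [mul_apply, one_apply, mul_comm] using congrFun (congrFun hU i) i'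
  calc krausMap (fun j => ∑ i, U i j • K i) X
      = ∑ i', ∑ i, (∑ j, star (U i' j) * U i j) • (K i * X * (K i')ᴴ) := by
        simp only [krausMap, conjTranspose_sum, conjTranspose_smul, Matrix.sum_mul, Matrix.mul_sum,
          Matrix.smul_mul, Matrix.mul_smul, Finset.smul_sum, smul_smul, Finset.sum_smul]
        rw [Finset.sum_comm]
        exact Finset.sum_congr rfl fun i' _ => Finset.sum_comm
    _ = krausMap K X := by
        simp only [hU', ite_smul, one_smul, zero_smul, Finset.sum_ite_eq', Finset.mem_univ, if_true]
        rfl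

lemma conjTranspose_mul_unitary_mix [Fintype ι] [Fintype m] [DecidableEq n]
    (K : ι → Matrix m n ℂ) {g : Matrix ι ι ℂ} (hK : ∀ i i', (K i)ᴴ * K i' = g i i' • 1)
    (U : Matrix ι ι ℂ) (j j' : ι) :
    (∑ i, U i j • K i)ᴴ * ∑ i, U i j' • K i = (star U * g * U) j j' • 1 := by
  simp only [conjTranspose_sum, conjTranspose_smul, Matrix.sum_mul, Matrix.mul_sum,
    Matrix.smul_mul, Matrix.mul_smul, hK, smul_smul, ← Finset.sum_smul]
  congr 1
  simp only [mul_apply, star_apply, Finset.sum_mul, Finset.mul_sum]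
  exact Finset.sum_congr rfl fun i _ => Finset.sum_congr rfl fun i' _ => by ring

lemma exists_isOrthogonalScaledIsometries_of_nonneg [Fintype ι] [Fintype m] [Fintype n]
    [DecidableEq n] (A : ι → Matrix m n ℂ) (α : ι → ℝ) (hα : ∀ i, 0 ≤ α i) (hne : ∃ i, α i ≠ 0)
    (hA : ∀ i, (A i)ᴴ * A i = (α i : ℂ) • 1) (horth : ∀ i j, i ≠ j → (A j)ᴴ * A i = 0) :
    ∃ J, 0 < J ∧ ∃ (A' : Fin J → Matrix m n ℂ) (α' : Fin J → ℝ),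
      IsOrthogonalScaledIsometries A' α' ∧ krausMap A = krausMap A' := by
  classical
  set T := Finset.univ.filter fun i => α i ≠ 0
  have hT : ∀ i, i ∈ T ↔ α i ≠ 0 := by simp [T]
  have hzero : ∀ i ∉ T, A i = 0 := fun i hi =>
    conjTranspose_mul_self_eq_zero.mp (by rw [hA, not_not.mp ((hT i).not.mp hi)]; simp)
  let e := T.equivFin.symm
  obtain ⟨i₀, hi₀⟩ := hne
  refine ⟨T.card, Finset.card_pos.mpr ⟨i₀, (hT i₀).mpr hi₀⟩, fun t => A (e t), fun t => α (e t),
    ⟨fun t => (hα _).lt_of_ne ((hT _).mp (e t).2).symm, fun t => hA _,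
      fun s t hst => horth _ _ ((Subtype.coe_injective.comp e.injective).ne hst)⟩, ?_⟩
  ext1 X
  rw [krausMap, ← Finset.sum_subset (Finset.subset_univ T) fun i _ hi => by simp [hzero i hi],
    ← Finset.sum_coe_sort, ← e.sum_comp]
  rfl

lemma exists_isOrthogonalScaledIsometries_krausMap_eq [Fintype ι] [DecidableEq ι] [Fintype m]
    [Fintype n] [DecidableEq n] (K : ι → Matrix m n ℂ) {g : Matrix ι ι ℂ} (hg : g.PosSemidef)
    (hK : ∀ i i', (K i)ᴴ * K i' = g i i' • 1) (htr : g.trace ≠ 0) :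
    ∃ J, 0 < J ∧ ∃ (A : Fin J → Matrix m n ℂ) (α : Fin J → ℝ),
      IsOrthogonalScaledIsometries A α ∧ krausMap K = krausMap A := by
  set U : Matrix ι ι ℂ := (hg.1.eigenvectorUnitary : Matrix ι ι ℂ)
  have hdiag : star U * g * U = diagonal (RCLike.ofReal ∘ hg.1.eigenvalues) := by
    simpa [Unitary.conjStarAlgAut_star_apply] using hg.1.conjStarAlgAut_star_eigenvectorUnitary
  have hgram := conjTranspose_mul_unitary_mix K hK U
  rw [hdiag] at hgram
  have hne : ∃ j, hg.1.eigenvalues j ≠ 0 := by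
    by_contra! h
    exact htr (by simp [hg.1.trace_eq_sum_eigenvalues, h])
  obtain ⟨J, hJ, A, α, hA, hKA⟩ := exists_isOrthogonalScaledIsometries_of_nonneg
    (fun j => ∑ i, U i j • K i) hg.1.eigenvalues hg.eigenvalues_nonneg hne
    (fun j => by simpa using hgram j j) (fun i j hij => by simpa [hij.symm] using hgram j i)
  exact ⟨J, hJ, A, α, hA,
    (krausMap_unitary_mix K (mem_unitaryGroup_iff.mp hg.1.eigenvectorUnitary.2)).symm.trans hKA⟩

lemma conjTranspose_mul_sum_conjTranspose_mul_self_mul [Fintype κ] [Fintype m] [Fintype n]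
    [DecidableEq n] (R : κ → Matrix n m ℂ) (F : ι → Matrix m n ℂ) (C : Matrix κ ι ℂ)
    (h : ∀ k i, R k * F i = C k i • 1) (i i' : ι) :
    (F i)ᴴ * (∑ k, (R k)ᴴ * R k) * F i' = (Cᴴ * C) i i' • 1 := by
  calc (F i)ᴴ * (∑ k, (R k)ᴴ * R k) * F i' = ∑ k, (R k * F i)ᴴ * (R k * F i') := by
        simp only [Matrix.mul_sum, Matrix.sum_mul, conjTranspose_mul, Matrix.mul_assoc]
    _ = (Cᴴ * C) i i' • 1 := by
        simp only [h, conjTranspose_smul, conjTranspose_one, Matrix.smul_mul, Matrix.mul_smul,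
          Matrix.one_mul, smul_smul, mul_apply, conjTranspose_apply, Finset.sum_smul, mul_comm]

lemma trace_conjTranspose_mul_self [Fintype κ] [Fintype ι] (C : Matrix κ ι ℂ) :
    (Cᴴ * C).trace = ∑ x : κ × ι, C x.1 x.2 * star (C x.1 x.2) := by
  simp only [trace, diag, mul_apply, conjTranspose_apply, Fintype.sum_prod_type]
  rw [Finset.sum_comm]
  exact Finset.sum_congr rfl fun k _ => Finset.sum_congr rfl fun i _ => mul_comm _ _

lemma exists_isOrthogonalScaledIsometries_of_probCorrectable {d s r : ℕ} [NeZero d]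
    (Ek : Fin r → Mat s) (hE : ProbCorrectable d (krausMap Ek)) :
    ∃ (kS : ℕ) (S : Fin kS → Matrix (Fin s) (Fin d) ℂ),
      (1 - ∑ k, (S k)ᴴ * S k).PosSemidef ∧
      ∃ (R : Mat s) (hR : R.PosSemidef), (1 - R).PosSemidef ∧
        ∃ J, 0 < J ∧ ∃ (A : Fin J → Matrix (Fin s) (Fin d) ℂ) (α : Fin J → ℝ),
          IsOrthogonalScaledIsometries A α ∧
          ∀ X, hR.sqrt * krausMap Ek (krausMap S X) * hR.sqrt = krausMap A X := by
  obtain ⟨Smap, Rmap, p, ⟨kS, S, hSmap, hS⟩, ⟨kR, Rk, hRmap, hR1⟩, hp, hcorr⟩ := hE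
  have hR : (∑ l, (Rk l)ᴴ * Rk l).PosSemidef :=
    posSemidef_sum _ fun l _ => posSemidef_conjTranspose_mul_self (Rk l)
  refine ⟨kS, S, hS, _, hR, hR1, ?_⟩
  have hcomp : ∀ X, krausMap (fun x : Fin kR × Fin r × Fin kS => Rk x.1 * (Ek x.2.1 * S x.2.2)) X
      = (p : ℂ) • X := fun X => by
    rw [← hcorr X, funext hSmap, funext hRmap]
    simp only [← krausMap.eq_def, krausMap_krausMap]
  obtain ⟨c, hc, hcp⟩ := exists_eq_smul_one_of_krausMap_eq_smul _ _ hcomp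
  obtain ⟨C, hC⟩ : ∃ C : Matrix (Fin kR) (Fin r × Fin kS) ℂ, ∀ l x, C l x = c (l, x) :=
    ⟨Matrix.of fun l x => c (l, x), fun _ _ => rfl⟩
  have hscalar : ∀ l x, Rk l * (Ek x.1 * S x.2) = C l x • 1 := fun l x => by
    rw [hC]
    exact hc (l, x)
  have hgram : ∀ x y : Fin r × Fin kS,
      (hR.sqrt * (Ek x.1 * S x.2))ᴴ * (hR.sqrt * (Ek y.1 * S y.2)) = (Cᴴ * C) x y • 1 := by
    intro x y
    rw [conjTranspose_mul, hR.conjTranspose_sqrt, Matrix.mul_assoc, ← Matrix.mul_assoc hR.sqrt,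
      hR.sqrt_mul_sqrt, ← Matrix.mul_assoc]
    have key := conjTranspose_mul_sum_conjTranspose_mul_self_mul Rk (fun x => Ek x.1 * S x.2) C
    exact key (fun l x => hscalar l x) x y
  have htr : (Cᴴ * C).trace = p := by
    rw [trace_conjTranspose_mul_self, ← hcp]
    simp only [hC]
  obtain ⟨J, hJ, A, α, hA, hVA⟩ := exists_isOrthogonalScaledIsometries_krausMap_eq _
    (posSemidef_conjTranspose_mul_self C) hgram (by rw [htr]; exact_mod_cast hp.ne')
  refine ⟨J, hJ, A, α, hA, fun X => ?_⟩
  have hsqrt := mul_krausMap_mul_conjTranspose hR.sqrt Ek (krausMap S X)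
  rw [hR.conjTranspose_sqrt] at hsqrt
  rw [← hVA, hsqrt, krausMap_krausMap]
  simp only [Matrix.mul_assoc]

lemma posSemidef_smul_one_sub_mul_conjTranspose [Fintype m] [Fintype n] [DecidableEq m]
    [DecidableEq n] {A : Matrix m n ℂ} {α : ℝ} (hα : 0 ≤ α) (hA : Aᴴ * A = (α : ℂ) • 1) :
    ((α : ℂ) • 1 - A * Aᴴ).PosSemidef := by
  rcases hα.eq_or_lt with rfl | hα
  · obtain rfl : A = 0 := conjTranspose_mul_self_eq_zero.mp (by simpa using hA)
    simpa using PosSemidef.zero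
  set Q := (α : ℂ) • 1 - A * Aᴴ
  have hQ : Qᴴ = Q := by simp [Q]
  -- `A Aᴴ / α` is an orthogonal projection, so `Qᴴ Q = Q² = α Q`
  have hQQ : Qᴴ * Q = (α : ℂ) • Q := by
    have hAA : A * Aᴴ * (A * Aᴴ) = (α : ℂ) • (A * Aᴴ) := by
      rw [Matrix.mul_assoc, ← Matrix.mul_assoc Aᴴ, hA]
      simp
    rw [hQ]
    simp only [Q, sub_mul, mul_sub, smul_mul_assoc, mul_smul_comm, one_mul, mul_one, hAA,
      smul_sub, smul_smul]
    abel
  have : Q = ((α⁻¹ : ℝ) : ℂ) • (Qᴴ * Q) := by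
    rw [hQQ, smul_smul, ← Complex.ofReal_mul, inv_mul_cancel₀ hα.ne', Complex.ofReal_one, one_smul]
  rw [this]
  exact (posSemidef_conjTranspose_mul_self Q).smul (by exact_mod_cast (inv_pos.mpr hα).le)

lemma posSemidef_sum_smul_one_sub_mul_conjTranspose [Fintype ι] [Fintype m] [Fintype n]
    [DecidableEq m] [DecidableEq n] {A : ι → Matrix m n ℂ} {α : ι → ℝ} (hα : ∀ i, 0 ≤ α i)
    (hA : ∀ i, (A i)ᴴ * A i = (α i : ℂ) • 1) :
    (((∑ i, α i : ℝ) : ℂ) • 1 - ∑ i, A i * (A i)ᴴ).PosSemidef := by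
  have := posSemidef_sum Finset.univ fun i _ =>
    posSemidef_smul_one_sub_mul_conjTranspose (hα i) (hA i)
  rwa [Finset.sum_sub_distrib, ← Finset.sum_smul, ← Complex.ofReal_sum] at this

lemma krausMap_conjTranspose_krausMap [Fintype ι] [Fintype m] [Fintype n] [DecidableEq n]
    {A : ι → Matrix m n ℂ} {α : ι → ℝ} (hA : IsOrthogonalScaledIsometries A α)
    (X : Matrix n n ℂ) :
    krausMap (fun j => (A j)ᴴ) (krausMap A X) = ((∑ j, α j ^ 2 : ℝ) : ℂ) • X := by
  rw [krausMap_krausMap, krausMap, Fintype.sum_prod_type, Complex.ofReal_sum, Finset.sum_smul]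
  refine Finset.sum_congr rfl fun j _ => ?_
  rw [Finset.sum_eq_single j (fun j' _ h => by simp [hA.2.2 j' j h]) (by simp), hA.2.1 j]
  simp only [conjTranspose_smul, conjTranspose_one, Complex.star_def, Complex.conj_ofReal,
    Matrix.smul_mul, Matrix.mul_smul, Matrix.one_mul, Matrix.mul_one, smul_smul, sq,
    Complex.ofReal_mul]

lemma probCorrectable_of_isOrthogonalScaledIsometries {d s kS J : ℕ} {E : Mat s → Mat s}
    {S : Fin kS → Matrix (Fin s) (Fin d) ℂ} (hS : (1 - ∑ k, (S k)ᴴ * S k).PosSemidef)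
    {R : Mat s} (hR : R.PosSemidef) (hR1 : (1 - R).PosSemidef) (hJ : 0 < J)
    {A : Fin J → Matrix (Fin s) (Fin d) ℂ} {α : Fin J → ℝ}
    (hA : IsOrthogonalScaledIsometries A α)
    (hE : ∀ X, hR.sqrt * E (krausMap S X) * hR.sqrt = krausMap A X) : ProbCorrectable d E := by
  have hq := hR.conjTranspose_sqrt
  have hqq := hR.sqrt_mul_sqrt
  generalize hR.sqrt = q at hq hqq hE
  have hJ' : (Finset.univ : Finset (Fin J)).Nonempty := ⟨⟨0, hJ⟩, Finset.mem_univ _⟩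
  have hP := posSemidef_sum_smul_one_sub_mul_conjTranspose (fun j => (hA.1 j).le) hA.2.1
  generalize ht_def : ∑ j, α j = t at hP
  have ht : 0 < t := ht_def ▸ Finset.sum_pos (fun j _ => hA.1 j) hJ'
  set c : ℂ := ((√t⁻¹ : ℝ) : ℂ)
  have hc : star c * c = ((t⁻¹ : ℝ) : ℂ) := by
    rw [Complex.star_def, Complex.conj_ofReal, ← Complex.ofReal_mul,
      Real.mul_self_sqrt (inv_pos.mpr ht).le]
  set K : Fin J → Matrix (Fin d) (Fin s) ℂ := fun j => c • ((A j)ᴴ * q)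
  have hK : ∀ Y, krausMap K Y = ((t⁻¹ : ℝ) : ℂ) • krausMap (fun j => (A j)ᴴ) (q * Y * q) := by
    intro Y
    simp only [krausMap, K, conjTranspose_smul, conjTranspose_mul, conjTranspose_conjTranspose, hq,
      Matrix.smul_mul, Matrix.mul_smul, smul_smul, hc, Finset.smul_sum, Matrix.mul_assoc]
  have hKK : ∑ j, (K j)ᴴ * K j = ((t⁻¹ : ℝ) : ℂ) • (q * (∑ j, A j * (A j)ᴴ) * q) := by
    simp only [K, conjTranspose_smul, conjTranspose_mul, conjTranspose_conjTranspose, hq,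
      Matrix.smul_mul, Matrix.mul_smul, smul_smul, mul_comm c, hc, Finset.smul_sum,
      Matrix.mul_sum, Matrix.sum_mul, Matrix.mul_assoc]
  refine ⟨krausMap S, krausMap K, t⁻¹ * ∑ j, α j ^ 2, ⟨kS, S, fun _ => rfl, hS⟩,
    ⟨J, K, fun _ => rfl, ?_⟩,
    mul_pos (inv_pos.mpr ht) (Finset.sum_pos (fun j _ => pow_pos (hA.1 j) 2) hJ'), fun X => ?_⟩
  · have hsplit : 1 - ∑ j, (K j)ᴴ * K j
        = (1 - R) + ((t⁻¹ : ℝ) : ℂ) • (q * ((t : ℂ) • 1 - ∑ j, A j * (A j)ᴴ) * q) := by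
      rw [hKK, Matrix.mul_sub, Matrix.sub_mul, smul_sub, Matrix.mul_smul, Matrix.mul_one,
        Matrix.smul_mul, hqq, smul_smul, ← Complex.ofReal_mul, inv_mul_cancel₀ ht.ne',
        Complex.ofReal_one, one_smul]
      abel
    rw [hsplit]
    refine hR1.add (PosSemidef.smul ?_ (by exact_mod_cast (inv_pos.mpr ht).le))
    simpa only [hq] using hP.mul_mul_conjTranspose_same q
  · rw [hK, hE, krausMap_conjTranspose_krausMap hA, smul_smul, ← Complex.ofReal_mul]

theorem stmt_1_general (d s r : ℕ) (hd : 1 ≤ d)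
    (E : Mat s → Mat s) (Ek : Fin r → Mat s)
    (hEk : ∀ X, E X = ∑ i, Ek i * X * (Ek i)ᴴ) :
    ProbCorrectable d E ↔
      ∃ (kS : ℕ) (S : Fin kS → Matrix (Fin s) (Fin d) ℂ),
        (1 - ∑ k, (S k)ᴴ * S k).PosSemidef ∧
        ∃ (R : Mat s) (hR : R.PosSemidef),
          (1 - R).PosSemidef ∧
          ∃ (J : ℕ), 0 < J ∧
            ∃ (A : Fin J → Matrix (Fin s) (Fin d) ℂ) (α : Fin J → ℝ),
              (∀ j, 0 < α j) ∧
              (∀ j, (A j)ᴴ * A j = (α j : ℂ) • (1 : Mat d)) ∧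
              (∀ i j, i ≠ j → (A j)ᴴ * A i = 0) ∧
              ∀ X : Mat d,
                ∑ i : Fin r, ∑ k : Fin kS,
                    hR.sqrt * Ek i * S k * X * (S k)ᴴ * (Ek i)ᴴ * hR.sqrt
                  = ∑ j, A j * X * (A j)ᴴ := by
  have : NeZero d := NeZero.of_pos hd
  obtain rfl : E = krausMap Ek := funext hEk
  constructor
  · intro h
    obtain ⟨kS, S, hS, R, hR, hR1, J, hJ, A, α, ⟨hα, hA, horth⟩, hE⟩ :=
      exists_isOrthogonalScaledIsometries_of_probCorrectable Ek h
    refine ⟨kS, S, hS, R, hR, hR1, J, hJ, A, α, hα, hA, horth, fun X => ?_⟩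
    rw [← mul_krausMap_krausMap_mul]
    exact hE X
  · rintro ⟨kS, S, hS, R, hR, hR1, J, hJ, A, α, hα, hA, horth, hE⟩
    refine probCorrectable_of_isOrthogonalScaledIsometries hS hR hR1 hJ ⟨hα, hA, horth⟩ fun X => ?_
    rw [mul_krausMap_krausMap_mul]
    exact hE X

/-- Theorem 1 (A) ⟺ (B). -/
theorem stmt_1 (d s r : ℕ) (hd : 1 ≤ d) (hs : 1 ≤ s) (hr : 1 ≤ r)
    (E : Mat s → Mat s) (Ek : Fin r → Mat s)
    (hEk : ∀ X, E X = ∑ i, Ek i * X * (Ek i)ᴴ)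
    (hTP : ∑ i, (Ek i)ᴴ * Ek i = 1) :
    ProbCorrectable d E ↔
      ∃ (kS : ℕ) (S : Fin kS → Matrix (Fin s) (Fin d) ℂ),
        (1 - ∑ k, (S k)ᴴ * S k).PosSemidef ∧
        ∃ (R : Mat s) (hR : R.PosSemidef),
          (1 - R).PosSemidef ∧
          ∃ (J : ℕ), 0 < J ∧
            ∃ (A : Fin J → Matrix (Fin s) (Fin d) ℂ) (α : Fin J → ℝ),
              (∀ j, 0 < α j) ∧
              (∀ j, (A j)ᴴ * A j = (α j : ℂ) • (1 : Mat d)) ∧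
              (∀ i j, i ≠ j → (A j)ᴴ * A i = 0) ∧
              ∀ X : Mat d,
                ∑ i : Fin r, ∑ k : Fin kS,
                    hR.sqrt * Ek i * S k * X * (S k)ᴴ * (Ek i)ᴴ * hR.sqrt
                  = ∑ j, A j * X * (A j)ᴴ :=
  stmt_1_general d s r hd E Ek hEk
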